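/- Let G=(V,E) be a finite simple undirected graph, let 0 < p_e < 1 for all e ∈ E and 0 < λ_v ≤ 1 for all v ∈ V, and let wt_wrc denote the weight function of the weighted random cluster model with edge parameters p and vertex weights λ. Then the Metropolis acceptance probabilities of the edge-flipping dynamics are monotone: for all X ⊆ Y ⊆ E and every edge e ∈ E, min{1, wt_wrc(X∪{e})/wt_wrc(X)} ≤ min{1, wt_wrc(Y∪{e})/wt_wrc(Y)} and min{1, wt_wrc(Y\{e})/wt_wrc(Y)} ≤ min{1, wt_wrc(X\{e})/wt_wrc(X)}. (Consequently, the grand coupling φ of the edge-flipping dynamics for the weighted random cluster model is monotone with respect to the subset partial order: X ⊆ Y implies φ(X,U) ⊆ φ(Y,U) for every realization U of the update randomness.) -/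

import Mathlib

open Finset
open scoped Classical

noncomputable section

variable {V : Type*} [Fintype V] [DecidableEq V]

/-- The vertex set of the connected component of `v` in the graph `(V, S)`. -/
def compOf (S : Finset (Sym2 V)) (v : V) : Finset V :=
  Finset.univ.filter fun u => (SimpleGraph.fromEdgeSet (↑S : Set (Sym2 V))).Reachable v u

/-- `κ(V,S)`: the set of vertex sets of connected components of the graph `(V, S)`. -/
def kappa (S : Finset (Sym2 V)) : Finset (Finset V) :=
  Finset.univ.image (compOf S)

/-- `∏_{C ∈ κ(V,S)} (1 + ∏_{u ∈ C} λ_u)`. -/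
def clusterProd (S : Finset (Sym2 V)) (lam : V → ℝ) : ℝ :=
  ∏ C ∈ kappa S, (1 + ∏ u ∈ C, lam u)

/-- Weight of an edge subset `S ⊆ E₀` in the weighted random cluster model. -/
def wtWRC (E₀ : Finset (Sym2 V)) (q : Sym2 V → ℝ) (lam : V → ℝ) (S : Finset (Sym2 V)) : ℝ :=
  (∏ e ∈ S, q e) * (∏ f ∈ E₀ \ S, (1 - q f)) * clusterProd S lam

/-- Partition function of the weighted random cluster model. -/
def ZWRC (E₀ : Finset (Sym2 V)) (q : Sym2 V → ℝ) (lam : V → ℝ) : ℝ :=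
  ∑ S ∈ E₀.powerset, wtWRC E₀ q lam S

/-- The weighted random cluster distribution. -/
def piWRC (E₀ : Finset (Sym2 V)) (q : Sym2 V → ℝ) (lam : V → ℝ) (S : Finset (Sym2 V)) : ℝ :=
  wtWRC E₀ q lam S / ZWRC E₀ q lam

/-- The monochromatic edges of a spin configuration `σ`. -/
def monoEdges (E₀ : Finset (Sym2 V)) (σ : V → Bool) : Finset (Sym2 V) :=
  E₀.filter fun e => (e.map σ).IsDiag

/-- Weight of a spin configuration in the Ising model. -/
def wtIsing (E₀ : Finset (Sym2 V)) (β : Sym2 V → ℝ) (lam : V → ℝ) (σ : V → Bool) : ℝ :=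
  (∏ e ∈ monoEdges E₀ σ, β e) * ∏ v : V, (if σ v then lam v else 1)

/-- Ising partition function. -/
def ZIsing (E₀ : Finset (Sym2 V)) (β : Sym2 V → ℝ) (lam : V → ℝ) : ℝ :=
  ∑ σ : V → Bool, wtIsing E₀ β lam σ

/-- Ising Gibbs distribution. -/
def piIsing (E₀ : Finset (Sym2 V)) (β : Sym2 V → ℝ) (lam : V → ℝ) (σ : V → Bool) : ℝ :=
  wtIsing E₀ β lam σ / ZIsing E₀ β lam

/-- Vertices of odd degree in the graph `(V, S)`. -/
def oddVerts (S : Finset (Sym2 V)) : Finset V :=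
  Finset.univ.filter fun v => Odd (S.filter fun e => v ∈ e).card

/-- Weight of an edge subset in the subgraph-world model. -/
def wtSG (E₀ : Finset (Sym2 V)) (p : Sym2 V → ℝ) (η : V → ℝ) (S : Finset (Sym2 V)) : ℝ :=
  (∏ e ∈ S, p e) * (∏ f ∈ E₀ \ S, (1 - p f)) * ∏ v ∈ oddVerts S, η v

/-- Subgraph-world partition function. -/
def ZSG (E₀ : Finset (Sym2 V)) (p : Sym2 V → ℝ) (η : V → ℝ) : ℝ :=
  ∑ S ∈ E₀.powerset, wtSG E₀ p η S

/-- Subgraph-world distribution. -/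
def piSG (E₀ : Finset (Sym2 V)) (p : Sym2 V → ℝ) (η : V → ℝ) (S : Finset (Sym2 V)) : ℝ :=
  wtSG E₀ p η S / ZSG E₀ p η

/-- The transformation `P_{I→R}` from Ising configurations to edge subsets. -/
def PIR (E₀ : Finset (Sym2 V)) (β : Sym2 V → ℝ) (σ : V → Bool) (S : Finset (Sym2 V)) : ℝ :=
  if S ⊆ monoEdges E₀ σ then
    (∏ e ∈ S, (1 - (β e)⁻¹)) * ∏ f ∈ monoEdges E₀ σ \ S, (β f)⁻¹
  else 0

/-- The transformation `P_{R→I}` from edge subsets to Ising configurations. -/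
def PRI (E₀ : Finset (Sym2 V)) (lam : V → ℝ) (S : Finset (Sym2 V)) (σ : V → Bool) : ℝ :=
  if S ⊆ monoEdges E₀ σ then
    ∏ C ∈ kappa S, ((∏ v ∈ C, if σ v then lam v else 1) / (1 + ∏ v ∈ C, lam v))
  else 0

/-- Swendsen-Wang dynamics for the Ising model: `P_{I→R} ⬝ P_{R→I}`. -/
def PSWIsing (E₀ : Finset (Sym2 V)) (β : Sym2 V → ℝ) (lam : V → ℝ) (σ τ : V → Bool) : ℝ :=
  ∑ S ∈ E₀.powerset, PIR E₀ β σ S * PRI E₀ lam S τ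

/-- Swendsen-Wang dynamics for the weighted random cluster model: `P_{R→I} ⬝ P_{I→R}`. -/
def PSWwrc (E₀ : Finset (Sym2 V)) (β : Sym2 V → ℝ) (lam : V → ℝ)
    (S S' : Finset (Sym2 V)) : ℝ :=
  ∑ σ : V → Bool, PRI E₀ lam S σ * PIR E₀ β σ S'

/-- Lazy edge-flipping (Metropolis) dynamics for a distribution `pi` on subsets of `E₀`. -/
def PEF (E₀ : Finset (Sym2 V)) (pi : Finset (Sym2 V) → ℝ) (x y : Finset (Sym2 V)) : ℝ :=
  if x = y then
    1 - (1 / (2 * (E₀.card : ℝ))) * ∑ e ∈ E₀, min 1 (pi (symmDiff x {e}) / pi x)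
  else if (symmDiff x y).card = 1 then
    (1 / (2 * (E₀.card : ℝ))) * min 1 (pi y / pi x)
  else 0

/-- Variance of `f` with respect to a distribution `pi` supported on `states`. -/
def varOn {α : Type*} (states : Finset α) (pi f : α → ℝ) : ℝ :=
  (∑ x ∈ states, pi x * f x ^ 2) - (∑ x ∈ states, pi x * f x) ^ 2

/-- Dirichlet form of a Markov kernel `P` with stationary distribution `pi` on `states`. -/
def dirichletOn {α : Type*} (states : Finset α) (pi : α → ℝ) (P : α → α → ℝ) (f : α → ℝ) : ℝ :=
  ∑ x ∈ states, pi x * f x * (f x - ∑ y ∈ states, P x y * f y)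

/-- Spectral gap of a reversible Markov kernel `P` with stationary distribution `pi`. -/
def gapOn {α : Type*} (states : Finset α) (pi : α → ℝ) (P : α → α → ℝ) : ℝ :=
  sInf ((fun f : α → ℝ => dirichletOn states pi P f / varOn states pi f) ''
    {f | varOn states pi f ≠ 0})

/-- Total variation distance between two distributions on `states`. -/
def dTV {α : Type*} (states : Finset α) (μ ν : α → ℝ) : ℝ :=
  (1 / 2) * ∑ z ∈ states, |μ z - ν z|

/-- `t`-step transition probabilities of the Markov kernel `P` on state space `states`. -/
def kpow {α : Type*} (states : Finset α) (P : α → α → ℝ) : ℕ → α → α → ℝ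
  | 0 => fun x y => if x = y then 1 else 0
  | (t + 1) => fun x y => ∑ z ∈ states, P x z * kpow states P t z y

/-!
Adding the edge `e = uv` to `S` multiplies the cluster product by `1` if `u` and `v` are already
connected in `(V, S)`, and otherwise by `(1 + a b) / ((1 + a) (1 + b))`, where `a` and `b` are the
`λ`-weights of the two components being merged. For `λ ≤ 1` this factor is at most `1` and
decreases in `a` and `b`; as `S` grows the components of `u` and `v` grow, so their weights
shrink and the factor increases. Hence `wt(S ∪ {e}) / wt(S)` is monotone in `S`, which is
exactly the monotonicity of both Metropolis acceptance probabilities.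
-/

open SimpleGraph

namespace SimpleGraph

variable {W : Type*} (G : SimpleGraph W) {u v x y : W}

lemma reachable_sup_edge : (G ⊔ edge u v).Reachable u v := by
  by_cases huv : u = v
  · exact huv ▸ Reachable.refl u
  · exact Adj.reachable (Or.inr ((edge_adj u v u v).2 ⟨Or.inl ⟨rfl, rfl⟩, huv⟩))

lemma reachable_sup_edge_iff :
    (G ⊔ edge u v).Reachable x y ↔ G.Reachable x y ∨
      ((G.Reachable u x ∨ G.Reachable v x) ∧ (G.Reachable u y ∨ G.Reachable v y)) := by
  constructor
  · intro h
    rw [reachable_iff_reflTransGen] at h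
    induction h with
    | refl => exact Or.inl (Reachable.refl x)
    | @tail b c _ hbc ih =>
      rcases hbc with hbc | hbc
      · rcases ih with hxb | ⟨hx, hb⟩
        · exact Or.inl (hxb.trans hbc.reachable)
        · exact Or.inr ⟨hx, hb.imp (·.trans hbc.reachable) (·.trans hbc.reachable)⟩
      · obtain ⟨⟨rfl, rfl⟩ | ⟨rfl, rfl⟩, -⟩ := (edge_adj u v b c).1 hbc
        · have hx := ih.elim (fun hxb => Or.inl hxb.symm) And.left
          exact Or.inr ⟨hx, Or.inr (Reachable.refl _)⟩
        · have hx := ih.elim (fun hxb => Or.inr hxb.symm) And.left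
          exact Or.inr ⟨hx, Or.inl (Reachable.refl _)⟩
  · have hle : G ≤ G ⊔ edge u v := le_sup_left
    have hU : ∀ {w}, G.Reachable u w ∨ G.Reachable v w → (G ⊔ edge u v).Reachable u w :=
      fun hw => hw.elim (·.mono hle) ((G.reachable_sup_edge).trans ∘ (·.mono hle))
    rintro (h | ⟨hx, hy⟩)
    · exact h.mono hle
    · exact (hU hx).symm.trans (hU hy)

lemma fromEdgeSet_insert (s : Set (Sym2 W)) (u v : W) :
    fromEdgeSet (insert s(u, v) s) = fromEdgeSet s ⊔ edge u v := by
  rw [edge, ← fromEdgeSet_union, Set.insert_eq, Set.union_comm]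

end SimpleGraph

section Components

variable {S : Finset (Sym2 V)} {u v x y : V}

lemma mem_compOf : y ∈ compOf S x ↔ (fromEdgeSet ↑S).Reachable x y := by
  simp [compOf]

lemma mem_compOf_self (S : Finset (Sym2 V)) (x : V) : x ∈ compOf S x :=
  mem_compOf.2 (Reachable.refl x)

lemma compOf_eq_of_mem (h : y ∈ compOf S x) : compOf S y = compOf S x := by
  ext w
  simp only [mem_compOf] at h ⊢
  exact ⟨fun hw => h.trans hw, fun hw => h.symm.trans hw⟩

lemma compOf_mono {X Y : Finset (Sym2 V)} (hXY : X ⊆ Y) (x : V) : compOf X x ⊆ compOf Y x :=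
  fun _ hw => mem_compOf.2 ((mem_compOf.1 hw).mono (fromEdgeSet_mono (coe_subset.2 hXY)))

lemma compOf_mem_kappa (S : Finset (Sym2 V)) (x : V) : compOf S x ∈ kappa S :=
  mem_image_of_mem _ (mem_univ x)

lemma compOf_insert (S : Finset (Sym2 V)) (u v x : V) :
    compOf (insert s(u, v) S) x =
      if x ∈ compOf S u ∪ compOf S v then compOf S u ∪ compOf S v else compOf S x := by
  ext y
  rw [mem_compOf, coe_insert, fromEdgeSet_insert, reachable_sup_edge_iff]
  split_ifs with hx <;> simp only [mem_union, mem_compOf] at hx ⊢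
  · simp only [hx, true_and, or_iff_right_iff_imp]
    exact fun hxy => hx.imp (·.trans hxy) (·.trans hxy)
  · simp [hx]

lemma kappa_insert (S : Finset (Sym2 V)) (u v : V) :
    kappa (insert s(u, v) S) =
      insert (compOf S u ∪ compOf S v) (((kappa S).erase (compOf S u)).erase (compOf S v)) := by
  ext C
  simp only [kappa, mem_image, mem_univ, true_and, mem_insert, mem_erase, compOf_insert]
  constructor
  · rintro ⟨x, rfl⟩
    split_ifs with hx
    · exact Or.inl rfl
    · refine Or.inr ⟨?_, ?_, x, rfl⟩ <;> intro hxC <;> apply hx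
      · exact mem_union_right _ (hxC ▸ mem_compOf_self S x)
      · exact mem_union_left _ (hxC ▸ mem_compOf_self S x)
  · rintro (rfl | ⟨hCv, hCu, x, rfl⟩)
    · exact ⟨u, if_pos (mem_union_left _ (mem_compOf_self S u))⟩
    · refine ⟨x, if_neg fun hx => ?_⟩
      rcases mem_union.1 hx with hu | hv
      · exact hCu (compOf_eq_of_mem hu)
      · exact hCv (compOf_eq_of_mem hv)

lemma kappa_insert_of_reachable (h : (fromEdgeSet ↑S).Reachable u v) :
    kappa (insert s(u, v) S) = kappa S := by
  rw [kappa_insert, compOf_eq_of_mem (mem_compOf.2 h), union_self, erase_idem,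
    insert_erase (compOf_mem_kappa S u)]

end Components

def mergeFactor (a b : ℝ) : ℝ := (1 + a * b) / ((1 + a) * (1 + b))

lemma mergeFactor_le_one {a b : ℝ} (ha : 0 ≤ a) (hb : 0 ≤ b) : mergeFactor a b ≤ 1 :=
  (div_le_one (by nlinarith)).2 (by nlinarith)

lemma mergeFactor_anti {a b a' b' : ℝ} (ha' : 0 ≤ a') (haa : a' ≤ a) (ha : a ≤ 1)
    (hb' : 0 ≤ b') (hbb : b' ≤ b) (hb : b ≤ 1) : mergeFactor a b ≤ mergeFactor a' b' := by
  rw [mergeFactor, mergeFactor, div_le_div_iff₀ (mul_pos (by linarith) (by linarith))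
    (mul_pos (by linarith) (by linarith))]
  nlinarith [mul_nonneg (sub_nonneg.2 haa) (sub_nonneg.2 hb),
    mul_nonneg (sub_nonneg.2 hbb) (sub_nonneg.2 ha), mul_nonneg ha' hb',
    mul_nonneg (mul_nonneg (sub_nonneg.2 haa) (sub_nonneg.2 hb)) hb',
    mul_nonneg (mul_nonneg (sub_nonneg.2 hbb) (sub_nonneg.2 ha)) ha']

section ClusterProd

variable {lam : V → ℝ}

lemma clusterProd_insert_of_reachable {S : Finset (Sym2 V)} {u v : V}
    (h : (fromEdgeSet ↑S).Reachable u v) :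
    clusterProd (insert s(u, v) S) lam = clusterProd S lam := by
  rw [clusterProd, clusterProd, kappa_insert_of_reachable h]

variable (h0 : ∀ v, 0 ≤ lam v)
include h0

lemma clusterProd_pos (S : Finset (Sym2 V)) : 0 < clusterProd S lam :=
  prod_pos fun C _ => by linarith [prod_nonneg fun v (_ : v ∈ C) => h0 v]

lemma clusterProd_insert_of_not_reachable {S : Finset (Sym2 V)} {u v : V}
    (h : ¬ (fromEdgeSet ↑S).Reachable u v) :
    clusterProd (insert s(u, v) S) lam =
      mergeFactor (∏ w ∈ compOf S u, lam w) (∏ w ∈ compOf S v, lam w) * clusterProd S lam := by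
  set Cu := compOf S u
  set Cv := compOf S v
  have hdisj : Disjoint Cu Cv := disjoint_left.2 fun w hu hv =>
    h ((mem_compOf.1 hu).trans (mem_compOf.1 hv).symm)
  have hu : Cu ∈ kappa S := compOf_mem_kappa S u
  have hvu : Cv ∈ (kappa S).erase Cu := by
    refine mem_erase.2 ⟨fun hC => h (mem_compOf.1 ?_), compOf_mem_kappa S v⟩
    exact (hC ▸ mem_compOf_self S v : v ∈ Cu)
  have hnew : Cu ∪ Cv ∉ ((kappa S).erase Cu).erase Cv := by
    intro hC
    obtain ⟨x, -, hx⟩ := mem_image.1 (mem_of_mem_erase (mem_of_mem_erase hC))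
    have hxu := mem_compOf.1 (hx ▸ mem_union_left Cv (mem_compOf_self S u))
    have hxv := mem_compOf.1 (hx ▸ mem_union_right Cu (mem_compOf_self S v))
    exact h (hxu.symm.trans hxv)
  have ha := prod_nonneg fun w (_ : w ∈ Cu) => h0 w
  have hb := prod_nonneg fun w (_ : w ∈ Cv) => h0 w
  rw [clusterProd, clusterProd, kappa_insert, prod_insert hnew,
    prod_union hdisj, ← mul_prod_erase _ _ hu, ← mul_prod_erase _ _ hvu,
    mergeFactor]
  field_simp

lemma clusterProd_insert_le (S : Finset (Sym2 V)) (u v : V) :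
    clusterProd (insert s(u, v) S) lam ≤ clusterProd S lam := by
  by_cases h : (fromEdgeSet ↑S).Reachable u v
  · rw [clusterProd_insert_of_reachable h]
  · rw [clusterProd_insert_of_not_reachable h0 h]
    exact mul_le_of_le_one_left (clusterProd_pos h0 S).le
      (mergeFactor_le_one (prod_nonneg fun w _ => h0 w) (prod_nonneg fun w _ => h0 w))

variable (h1 : ∀ v, lam v ≤ 1)
include h1

/-- The FKG lattice condition for the cluster product, along a single edge. -/
lemma clusterProd_insert_mul_le {X Y : Finset (Sym2 V)} (hXY : X ⊆ Y) (u v : V) :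
    clusterProd (insert s(u, v) X) lam * clusterProd Y lam ≤
      clusterProd (insert s(u, v) Y) lam * clusterProd X lam := by
  by_cases hY : (fromEdgeSet ↑Y).Reachable u v
  · rw [clusterProd_insert_of_reachable hY, mul_comm]
    exact mul_le_mul_of_nonneg_left (clusterProd_insert_le h0 X u v)
      (clusterProd_pos h0 Y).le
  · have hX : ¬ (fromEdgeSet ↑X).Reachable u v :=
      fun h => hY (h.mono (fromEdgeSet_mono (coe_subset.2 hXY)))
    have hnonneg (A : Finset V) : 0 ≤ ∏ w ∈ A, lam w := prod_nonneg fun w _ => h0 w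
    have hle_one (A : Finset V) : ∏ w ∈ A, lam w ≤ 1 :=
      prod_le_one (fun w _ => h0 w) fun w _ => h1 w
    have hanti {A B : Finset V} (hAB : A ⊆ B) : ∏ w ∈ B, lam w ≤ ∏ w ∈ A, lam w :=
      prod_anti_set_of_le_one h0 h1 hAB
    have hfactor := mergeFactor_anti (hnonneg _) (hanti (compOf_mono hXY u)) (hle_one _)
      (hnonneg _) (hanti (compOf_mono hXY v)) (hle_one _)
    rw [clusterProd_insert_of_not_reachable h0 hX, clusterProd_insert_of_not_reachable h0 hY,
      mul_assoc, mul_assoc, mul_comm (clusterProd X lam)]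
    exact mul_le_mul_of_nonneg_right hfactor
      (mul_pos (clusterProd_pos h0 Y) (clusterProd_pos h0 X)).le

end ClusterProd

lemma min_one_div_mono_of_insert_mul_le {α : Type*} [DecidableEq α] {E : Finset α}
    {w : Finset α → ℝ} {e : α} (hpos : ∀ S ⊆ E, 0 < w S)
    (hcross : ∀ X Y, X ⊆ Y → Y ⊆ E → e ∉ Y → w (insert e X) * w Y ≤ w (insert e Y) * w X)
    {X Y : Finset α} (hXY : X ⊆ Y) (hYE : Y ⊆ E) :
    min 1 (w (X ∪ {e}) / w X) ≤ min 1 (w (Y ∪ {e}) / w Y) ∧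
      min 1 (w (Y \ {e}) / w Y) ≤ min 1 (w (X \ {e}) / w X) := by
  have hX := hpos X (hXY.trans hYE)
  have hY := hpos Y hYE
  simp only [union_singleton, sdiff_singleton_eq_erase]
  constructor
  · by_cases heY : e ∈ Y
    · rw [insert_eq_of_mem heY, div_self hY.ne', min_self]
      exact min_le_left _ _
    · exact min_le_min_left _ ((div_le_div_iff₀ hX hY).2 (hcross X Y hXY hYE heY))
  · by_cases heX : e ∈ X
    · have h := hcross (X.erase e) (Y.erase e) (erase_subset_erase e hXY)
        ((erase_subset e Y).trans hYE) (notMem_erase e Y)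
      rw [insert_erase heX, insert_erase (hXY heX)] at h
      refine min_le_min_left _ ((div_le_div_iff₀ hY hX).2 ?_)
      linarith
    · rw [erase_eq_of_notMem heX, div_self hX.ne', min_self]
      exact min_le_left _ _

section Weight

variable {E₀ : Finset (Sym2 V)} {q : Sym2 V → ℝ} {lam : V → ℝ}

lemma wtWRC_pos (hq : ∀ f ∈ E₀, 0 < q f ∧ q f < 1) (h0 : ∀ v, 0 ≤ lam v)
    (S : Finset (Sym2 V)) (hS : S ⊆ E₀) : 0 < wtWRC E₀ q lam S := by
  refine mul_pos (mul_pos ?_ ?_) (clusterProd_pos h0 S)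
  · exact prod_pos fun f hf => (hq f (hS hf)).1
  · exact prod_pos fun f hf => sub_pos.2 (hq f (mem_sdiff.1 hf).1).2

lemma wtWRC_insert_mul {S : Finset (Sym2 V)} {e : Sym2 V} (he : e ∈ E₀) (heS : e ∉ S) :
    wtWRC E₀ q lam (insert e S) * ((1 - q e) * clusterProd S lam) =
      q e * clusterProd (insert e S) lam * wtWRC E₀ q lam S := by
  rw [wtWRC, wtWRC, prod_insert heS, sdiff_insert,
    ← mul_prod_erase (E₀ \ S) _ (mem_sdiff.2 ⟨he, heS⟩)]
  ring

lemma wtWRC_insert_mul_le (hq : ∀ f ∈ E₀, 0 < q f ∧ q f < 1) (h0 : ∀ v, 0 ≤ lam v)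
    (h1 : ∀ v, lam v ≤ 1) {e : Sym2 V} (he : e ∈ E₀) {X Y : Finset (Sym2 V)} (hXY : X ⊆ Y)
    (hYE : Y ⊆ E₀) (heY : e ∉ Y) :
    wtWRC E₀ q lam (insert e X) * wtWRC E₀ q lam Y ≤
      wtWRC E₀ q lam (insert e Y) * wtWRC E₀ q lam X := by
  induction e using Sym2.ind with
  | _ u v =>
  have hX := wtWRC_pos hq h0 X (hXY.trans hYE)
  have hY := wtWRC_pos hq h0 Y hYE
  have hqe := hq _ he
  have hscale : 0 < (1 - q s(u, v)) * clusterProd X lam * clusterProd Y lam :=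
    mul_pos (mul_pos (sub_pos.2 hqe.2) (clusterProd_pos h0 X)) (clusterProd_pos h0 Y)
  refine le_of_mul_le_mul_right ?_ hscale
  have hmX := wtWRC_insert_mul (q := q) (lam := lam) he (fun h => heY (hXY h))
  have hmY := wtWRC_insert_mul (q := q) (lam := lam) he heY
  calc wtWRC E₀ q lam (insert s(u, v) X) * wtWRC E₀ q lam Y *
        ((1 - q s(u, v)) * clusterProd X lam * clusterProd Y lam)
      = q s(u, v) * wtWRC E₀ q lam X * wtWRC E₀ q lam Y *
          (clusterProd (insert s(u, v) X) lam * clusterProd Y lam) := by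
        linear_combination (wtWRC E₀ q lam Y * clusterProd Y lam) * hmX
    _ ≤ q s(u, v) * wtWRC E₀ q lam X * wtWRC E₀ q lam Y *
          (clusterProd (insert s(u, v) Y) lam * clusterProd X lam) := by
        exact mul_le_mul_of_nonneg_left (clusterProd_insert_mul_le h0 h1 hXY u v)
          (mul_nonneg (mul_nonneg hqe.1.le hX.le) hY.le)
    _ = wtWRC E₀ q lam (insert s(u, v) Y) * wtWRC E₀ q lam X *
          ((1 - q s(u, v)) * clusterProd X lam * clusterProd Y lam) := by
        linear_combination -(wtWRC E₀ q lam X * clusterProd X lam) * hmY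

end Weight

/-- Monotonicity of the Metropolis acceptance probabilities of the edge-flipping dynamics for
the weighted random cluster model: for `X ⊆ Y` and any edge `e ∈ E`, the acceptance
probability of adding `e` is larger from `Y`, and the acceptance probability of removing `e`
is larger from `X`. -/
theorem wrc_grand_coupling_monotone {V : Type*} [Fintype V] [DecidableEq V]
    (G : SimpleGraph V) [DecidableRel G.Adj]
    (p : Sym2 V → ℝ) (lam : V → ℝ)
    (hp : ∀ e ∈ G.edgeFinset, 0 < p e ∧ p e < 1)
    (hlam : ∀ v : V, 0 < lam v ∧ lam v ≤ 1) :
    ∀ X Y : Finset (Sym2 V), X ⊆ Y → Y ⊆ G.edgeFinset → ∀ e ∈ G.edgeFinset,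
      min 1 (wtWRC G.edgeFinset p lam (X ∪ {e}) / wtWRC G.edgeFinset p lam X) ≤
        min 1 (wtWRC G.edgeFinset p lam (Y ∪ {e}) / wtWRC G.edgeFinset p lam Y) ∧
      min 1 (wtWRC G.edgeFinset p lam (Y \ {e}) / wtWRC G.edgeFinset p lam Y) ≤
        min 1 (wtWRC G.edgeFinset p lam (X \ {e}) / wtWRC G.edgeFinset p lam X) := by
  intro X Y hXY hYE e he
  have h0 : ∀ v, 0 ≤ lam v := fun v => (hlam v).1.le
  have h1 : ∀ v, lam v ≤ 1 := fun v => (hlam v).2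
  exact min_one_div_mono_of_insert_mul_le (wtWRC_pos hp h0)
    (fun _ _ hXY hYE heY => wtWRC_insert_mul_le hp h0 h1 he hXY hYE heY) hXY hYE
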